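/- The three conditions defining complete resource pooling are equivalent: for probability vectors α on C and β on S and a bipartite graph G with neighborhoods S(·), C(·), and U(S) := complement of C(complement of S), the following are equivalent: (a) α_C < β_{S(C)} for all nonempty proper C ⊂ 𝒞; (b) β_S < α_{C(S)} for all nonempty proper S ⊂ 𝒮; (c) α_{U(S)} < β_S for all nonempty proper S ⊂ 𝒮. (Assuming every agent type has at least one compatible good type and vice versa.) -/

import Mathlib

/-!
Write `S(C)` for the goods compatible with a set of agents `C` and `C(S)` for the agents
compatible with a set of goods `S`. Since both weight vectors have the same total mass,
a strict inequality between two sums is equivalent to the reverse inequality between the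
sums over the complements. Condition (c) for `S` is therefore condition (b) for `Sᶜ`.
For (a) ⇒ (b), apply (a) to the agents outside `C(S)`: all their goods lie outside `S`, so
`α_{C(S)ᶜ} < β_{Sᶜ}`, which is `β_S < α_{C(S)}`; the case `C(S) = 𝒞` is where positivity of
`β` enters. Exchanging the roles of agents and goods gives (b) ⇒ (a).
-/

open Finset

variable {ι κ M : Type*}

-- Reading `r j i` as "good `j` is compatible with agent `i`", `relImage r C` is `S(C)` and
-- `relImage (fun i j => r j i) S` is `C(S)`.
def relImage [Fintype κ] (r : κ → ι → Prop) [DecidableRel r] (C : Finset ι) : Finset κ :=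
  univ.filter fun j => ∃ i ∈ C, r j i

lemma filter_exists_eq_relImage [Fintype κ] (r : κ → ι → Prop) [DecidableRel r] (C : Finset ι)
    [DecidablePred fun j => ∃ i ∈ C, r j i] :
    univ.filter (fun j => ∃ i ∈ C, r j i) = relImage r C := by
  unfold relImage
  congr

lemma relImage_compl_relImage_flip_subset_compl [Fintype ι] [Fintype κ] [DecidableEq ι]
    [DecidableEq κ] (r : κ → ι → Prop) [DecidableRel r] (S : Finset κ) :
    relImage r (relImage (fun i j => r j i) S)ᶜ ⊆ Sᶜ := by
  intro j hj
  simp only [relImage, mem_filter, mem_univ, true_and, mem_compl] at hj ⊢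
  obtain ⟨i, hi, hji⟩ := hj
  exact fun hjS => hi ⟨j, hjS, hji⟩

lemma relImage_flip_nonempty [Fintype ι] {r : κ → ι → Prop} [DecidableRel r]
    (hr : ∀ j, ∃ i, r j i) {S : Finset κ} (hS : S.Nonempty) :
    (relImage (fun i j => r j i) S).Nonempty := by
  obtain ⟨j, hj⟩ := hS
  obtain ⟨i, hi⟩ := hr j
  exact ⟨i, mem_filter.2 ⟨mem_univ i, j, hj, hi⟩⟩

lemma compl_nonempty_iff_ne_univ [Fintype ι] [DecidableEq ι] {s : Finset ι} :
    sᶜ.Nonempty ↔ s ≠ univ := by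
  rw [← compl_ne_univ_iff_nonempty, compl_compl]

lemma forall_nonempty_ne_univ_compl_iff [Fintype ι] [DecidableEq ι] {P : Finset ι → Prop} :
    (∀ s : Finset ι, s.Nonempty → s ≠ univ → P sᶜ) ↔
      ∀ s : Finset ι, s.Nonempty → s ≠ univ → P s := by
  refine ⟨fun h s hs hs' => ?_, fun h s hs hs' => h sᶜ (compl_nonempty_iff_ne_univ.2 hs')
    ((compl_ne_univ_iff_nonempty s).2 hs)⟩
  simpa using h sᶜ (compl_nonempty_iff_ne_univ.2 hs') ((compl_ne_univ_iff_nonempty s).2 hs)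

section OrderedGroup

variable [Fintype ι] [Fintype κ] [DecidableEq ι] [DecidableEq κ] [AddCommGroup M]

lemma sum_compl_eq_sub (s : Finset ι) (f : ι → M) : ∑ i ∈ sᶜ, f i = ∑ i, f i - ∑ i ∈ s, f i :=
  eq_sub_of_add_eq (sum_compl_add_sum s f)

variable [PartialOrder M] [IsOrderedAddMonoid M]

lemma sum_compl_lt_sum_compl_iff {α : ι → M} {β : κ → M} (hsum : ∑ i, α i = ∑ j, β j)
    (s : Finset ι) (t : Finset κ) :
    ∑ i ∈ sᶜ, α i < ∑ j ∈ tᶜ, β j ↔ ∑ j ∈ t, β j < ∑ i ∈ s, α i := by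
  rw [sum_compl_eq_sub, sum_compl_eq_sub, hsum, sub_lt_sub_iff_left]

lemma sum_lt_sum_univ_of_ne_univ {β : κ → M} (hβ : ∀ j, 0 < β j) {S : Finset κ}
    (hS : S ≠ univ) : ∑ j ∈ S, β j < ∑ j, β j := by
  obtain ⟨j, hj⟩ := compl_nonempty_iff_ne_univ.2 hS
  exact sum_lt_sum_of_subset (subset_univ S) (mem_univ j) (mem_compl.1 hj) (hβ j)
    fun k _ _ => (hβ k).le

theorem sum_lt_sum_relImage_flip_of_forall_sum_lt_sum_relImage {r : κ → ι → Prop}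
    [DecidableRel r] {α : ι → M} {β : κ → M} (hβ : ∀ j, 0 < β j)
    (hsum : ∑ i, α i = ∑ j, β j) (hr : ∀ j, ∃ i, r j i)
    (ha : ∀ C : Finset ι, C.Nonempty → C ≠ univ → ∑ i ∈ C, α i < ∑ j ∈ relImage r C, β j)
    (S : Finset κ) (hS : S.Nonempty) (hS' : S ≠ univ) :
    ∑ j ∈ S, β j < ∑ i ∈ relImage (fun i j => r j i) S, α i := by
  set T := relImage (fun i j => r j i) S
  by_cases hT : T = univ
  · rw [hT, hsum]
    exact sum_lt_sum_univ_of_ne_univ hβ hS'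
  rw [← sum_compl_lt_sum_compl_iff hsum]
  calc ∑ i ∈ Tᶜ, α i
      < ∑ j ∈ relImage r Tᶜ, β j := ha Tᶜ (compl_nonempty_iff_ne_univ.2 hT)
        ((compl_ne_univ_iff_nonempty T).2 (relImage_flip_nonempty hr hS))
    _ ≤ ∑ j ∈ Sᶜ, β j := sum_le_sum_of_subset_of_nonneg
        (relImage_compl_relImage_flip_subset_compl r S) fun j _ _ => (hβ j).le

end OrderedGroup

/-- Equivalence of the three conditions defining complete resource pooling
    (Definition 7.1): for probability vectors `α` on `𝒞` and `β` on `𝒮` with positive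
    entries and a bipartite graph `G` in which every agent type has a compatible good
    type and vice versa, with `S(C)` the goods compatible with `C`, `C(S)` the agents
    compatible with `S`, and `U(S) = 𝒞 \ C(𝒮 \ S)` the agents compatible only with
    goods in `S`, the following are equivalent:
    (a) `α_C < β_{S(C)}` for all nonempty proper `C ⊂ 𝒞`;
    (b) `β_S < α_{C(S)}` for all nonempty proper `S ⊂ 𝒮`;
    (c) `α_{U(S)} < β_S` for all nonempty proper `S ⊂ 𝒮`. -/
theorem stmt_17 {I J : ℕ} (G : Fin J → Fin I → Bool)
    (α : Fin I → ℝ) (β : Fin J → ℝ)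
    (hα : ∀ i, 0 < α i) (hβ : ∀ j, 0 < β j)
    (hα1 : ∑ i, α i = 1) (hβ1 : ∑ j, β j = 1)
    (hagents : ∀ i : Fin I, ∃ j : Fin J, G j i)
    (hgoods : ∀ j : Fin J, ∃ i : Fin I, G j i) :
    (((∀ C : Finset (Fin I), C.Nonempty → C ≠ Finset.univ →
        (∑ i ∈ C, α i) < ∑ j ∈ Finset.univ.filter (fun j => ∃ i ∈ C, G j i), β j) ↔
      (∀ S : Finset (Fin J), S.Nonempty → S ≠ Finset.univ →
        (∑ j ∈ S, β j) < ∑ i ∈ Finset.univ.filter (fun i => ∃ j ∈ S, G j i), α i)) ∧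
     ((∀ S : Finset (Fin J), S.Nonempty → S ≠ Finset.univ →
        (∑ j ∈ S, β j) < ∑ i ∈ Finset.univ.filter (fun i => ∃ j ∈ S, G j i), α i) ↔
      (∀ S : Finset (Fin J), S.Nonempty → S ≠ Finset.univ →
        (∑ i ∈ Finset.univ \
            Finset.univ.filter (fun i => ∃ j ∈ Finset.univ \ S, G j i), α i)
          < ∑ j ∈ S, β j))) := by
  have hsum : ∑ i, α i = ∑ j, β j := hα1.trans hβ1.symm
  simp only [filter_exists_eq_relImage]
  refine ⟨⟨sum_lt_sum_relImage_flip_of_forall_sum_lt_sum_relImage hβ hsum hgoods,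
    sum_lt_sum_relImage_flip_of_forall_sum_lt_sum_relImage hα hsum.symm hagents⟩, ?_⟩
  simp only [← compl_eq_univ_sdiff]
  rw [← forall_nonempty_ne_univ_compl_iff]
  refine forall₃_congr fun S _ _ => ?_
  rw [← sum_compl_lt_sum_compl_iff hsum, compl_compl]
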